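/- Let K ≥ 1, let A, B, C, D be real symmetric K×K matrices, let E be a real symmetric positive definite K×K matrix, and let n_x, n_y ∈ ℝ with n_x² + n_y² = 1. Set X = A E⁻², Y = C E⁻², define the 3K×3K block matrices F' = [[0, I, 0], [E² − X B, X + B, 0], [−X D, D, X]], G' = [[0, 0, I], [−Y B, Y, B], [E² − Y D, 0, Y + D]], P = [[I, 0, I], [B + n_x E, −n_y E, B − n_x E], [D + n_y E, n_x E, D − n_y E]], and J = (1/2)·[[J₁₁, 0, J₁₃], [0, J₂₂, 0], [J₃₁, 0, J₃₃]], where J₁₁ = 2E + n_x(B + E⁻¹AE⁻¹) + n_y(D + E⁻¹CE⁻¹), J₁₃ = J₃₁ = n_x(B − E⁻¹AE⁻¹) + n_y(D − E⁻¹CE⁻¹), J₂₂ = 2n_x E⁻¹AE⁻¹ + 2n_y E⁻¹CE⁻¹, and J₃₃ = −2E + n_x(B + E⁻¹AE⁻¹) + n_y(D + E⁻¹CE⁻¹). Then (n_x F' + n_y G') · P = P · J, and J is a symmetric matrix. -/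
import Mathlib

set_option maxHeartbeats 4000000


open Matrix BigOperators

/-- Assemble a `3K × 3K` matrix from a `3 × 3` array of `K × K` blocks. -/
def block3 (K : ℕ) (M : Matrix (Fin 3) (Fin 3) (Matrix (Fin K) (Fin K) ℝ)) :
    Matrix (Fin 3 × Fin K) (Fin 3 × Fin K) ℝ :=
  Matrix.of fun p q => M p.1 q.1 p.2 q.2



private lemma block3_mul' (K : ℕ) (M N : Matrix (Fin 3) (Fin 3) (Matrix (Fin K) (Fin K) ℝ)) :
    block3 K M * block3 K N = block3 K (Matrix.of fun i j => ∑ k, M i k * N k j) := by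
  ext ⟨i, a⟩ ⟨j, b⟩
  simp only [block3, Matrix.mul_apply, Matrix.of_apply, Matrix.sum_apply,
    Fintype.sum_prod_type]

private lemma block3_add' (K : ℕ) (M N : Matrix (Fin 3) (Fin 3) (Matrix (Fin K) (Fin K) ℝ)) :
    block3 K M + block3 K N = block3 K (M + N) := rfl

private lemma block3_smul' (K : ℕ) (c : ℝ) (M : Matrix (Fin 3) (Fin 3) (Matrix (Fin K) (Fin K) ℝ)) :
    c • block3 K M = block3 K (c • M) := rfl

private lemma block3_transpose' (K : ℕ) (M : Matrix (Fin 3) (Fin 3) (Matrix (Fin K) (Fin K) ℝ)) :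
    (block3 K M)ᵀ = block3 K (Matrix.of fun i j => (M j i)ᵀ) := rfl

theorem sg_flux_pencil_similarity_computation
    (K : ℕ) (hK : 1 ≤ K)
    (A B C D E : Matrix (Fin K) (Fin K) ℝ)
    (hA : A.IsSymm) (hB : B.IsSymm) (hC : C.IsSymm) (hD : D.IsSymm)
    (hE : E.PosDef)
    (nx ny : ℝ) (hn : nx ^ 2 + ny ^ 2 = 1)
    (X Y : Matrix (Fin K) (Fin K) ℝ)
    (hX : X = A * (E⁻¹ * E⁻¹)) (hY : Y = C * (E⁻¹ * E⁻¹))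
    (F' G' P J : Matrix (Fin 3 × Fin K) (Fin 3 × Fin K) ℝ)
    (hF : F' = block3 K
      !![(0 : Matrix (Fin K) (Fin K) ℝ), 1, 0;
         E * E - X * B, X + B, 0;
         -(X * D), D, X])
    (hG : G' = block3 K
      !![(0 : Matrix (Fin K) (Fin K) ℝ), 0, 1;
         -(Y * B), Y, B;
         E * E - Y * D, 0, Y + D])
    (hP : P = block3 K
      !![(1 : Matrix (Fin K) (Fin K) ℝ), 0, 1;
         B + nx • E, -(ny • E), B - nx • E;
         D + ny • E, nx • E, D - ny • E])
    (J11 J13 J22 J33 : Matrix (Fin K) (Fin K) ℝ)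
    (hJ11 : J11 = (2 : ℝ) • E + nx • (B + E⁻¹ * A * E⁻¹) + ny • (D + E⁻¹ * C * E⁻¹))
    (hJ13 : J13 = nx • (B - E⁻¹ * A * E⁻¹) + ny • (D - E⁻¹ * C * E⁻¹))
    (hJ22 : J22 = (2 * nx) • (E⁻¹ * A * E⁻¹) + (2 * ny) • (E⁻¹ * C * E⁻¹))
    (hJ33 : J33 = (-(2 : ℝ)) • E + nx • (B + E⁻¹ * A * E⁻¹) + ny • (D + E⁻¹ * C * E⁻¹))
    (hJ : J = (1 / 2 : ℝ) • block3 K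
      !![J11, 0, J13;
         0, J22, 0;
         J13, 0, J33]) :
    (nx • F' + ny • G') * P = P * J ∧ J.IsSymm := by
  have hdet : IsUnit E.det := isUnit_iff_ne_zero.mpr hE.det_pos.ne'
  have h1 : E⁻¹ * E = 1 := Matrix.nonsing_inv_mul E hdet
  have h2 : E * E⁻¹ = 1 := Matrix.mul_nonsing_inv E hdet
  have h3 : ∀ M : Matrix (Fin K) (Fin K) ℝ, E⁻¹ * (E * M) = M := fun M => by
    rw [← mul_assoc, h1, one_mul]
  have h4 : ∀ M : Matrix (Fin K) (Fin K) ℝ, E * (E⁻¹ * M) = M := fun M => by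
    rw [← mul_assoc, h2, one_mul]
  have hEt : Eᵀ = E := by
    have := hE.isHermitian
    rwa [Matrix.IsHermitian, Matrix.conjTranspose_eq_transpose_of_trivial] at this
  have hEit : (E⁻¹)ᵀ = E⁻¹ := by rw [Matrix.transpose_nonsing_inv, hEt]
  have hAh : (E⁻¹ * A * E⁻¹)ᵀ = E⁻¹ * A * E⁻¹ := by
    rw [Matrix.transpose_mul, Matrix.transpose_mul, hEit, hA.eq, mul_assoc]
  have hCh : (E⁻¹ * C * E⁻¹)ᵀ = E⁻¹ * C * E⁻¹ := by
    rw [Matrix.transpose_mul, Matrix.transpose_mul, hEit, hC.eq, mul_assoc]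
  subst hX hY hF hG hP hJ11 hJ13 hJ22 hJ33 hJ
  constructor
  · rw [block3_smul', block3_smul', block3_add', block3_smul', block3_mul', block3_mul']
    refine congrArg _ ?_
    funext i j
    fin_cases i <;> fin_cases j <;>
      simp only [Fin.zero_eta, Fin.mk_one, Fin.reduceFinMk, Matrix.of_apply, Fin.sum_univ_three,
        Matrix.smul_apply, Matrix.add_apply,
        Matrix.cons_val', Matrix.cons_val_zero, Matrix.cons_val_one, Matrix.head_cons,
        Matrix.empty_val', Matrix.cons_val_fin_one, Matrix.head_fin_const, Fin.isValue,
        Matrix.cons_val_two, Matrix.tail_cons] <;>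
      (simp only [zero_mul, mul_zero, smul_zero, neg_mul, mul_neg, smul_neg, neg_add, neg_sub,
        zero_add, add_zero, mul_one, one_mul, mul_add, add_mul, mul_sub, sub_mul,
        smul_add, smul_sub, smul_smul, smul_mul_assoc, mul_smul_comm, mul_assoc,
        h1, h2, h3, h4];
       match_scalars <;>
         first
           | ring1
           | linear_combination hn
           | linear_combination nx * hn
           | linear_combination ny * hn
           | linear_combination (nx * ny) * hn
           | linear_combination (nx ^ 2) * hn
           | linear_combination (ny ^ 2) * hn
           | linear_combination (nx / 2) * hn
           | linear_combination (ny / 2) * hn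
           | linear_combination (-nx) * hn
           | linear_combination (-ny) * hn
           | linear_combination (-(nx * ny)) * hn
           | linear_combination (hn / 2)
           | linear_combination (-hn)
           | linear_combination (-hn / 2))
  · rw [Matrix.IsSymm, Matrix.transpose_smul, block3_transpose']
    refine congrArg _ (congrArg _ ?_)
    funext i j
    fin_cases i <;> fin_cases j <;>
      simp only [Fin.zero_eta, Fin.mk_one, Fin.reduceFinMk, Matrix.of_apply,
        Matrix.cons_val', Matrix.cons_val_zero, Matrix.cons_val_one, Matrix.head_cons,
        Matrix.empty_val', Matrix.cons_val_fin_one, Matrix.head_fin_const, Fin.isValue,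
        Matrix.cons_val_two, Matrix.tail_cons, Matrix.transpose_zero] <;>
      simp only [Matrix.transpose_add, Matrix.transpose_sub, Matrix.transpose_smul,
        Matrix.transpose_zero, hEt, hAh, hCh, hB.eq, hD.eq]
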